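/- Let J : ℝ^d → [0,∞) be measurable with min J = 0, and suppose there exist polynomials with positive exponents Poly_l(t) = ∑_{k=0}^M c_k^l t^{α_k} and Poly_u(t) = ∑_{k=0}^M c_k^u t^{α_k}, with 0 < α_0 < ... < α_M, c_k^l = 0 iff c_k^u = 0, such that Poly_l(t) ≤ V_J(t) ≤ Poly_u(t) for all t ≥ 0, where V_J(t) = vol{Y : J(Y) ≤ t}. Assume moreover V_J is absolutely continuous and the Gibbs normalizer ∫ exp(-J(Y)/λ) dY is finite for all small λ > 0. Then for random variables Y_λ with density proportional to exp(-J(Y)/λ), J(Y_λ) → 0 in probability as λ → 0; i.e., for all ε, δ > 0 there exists λ_0 > 0 such that for all 0 < λ ≤ λ_0, P(J(Y_λ) ≤ ε) ≥ 1 - δ. -/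

import Mathlib

/-!
On `{J ≤ λ}` the Gibbs weight `exp (-J/λ)` is at least `e⁻¹`, so the polynomial lower bound
`c λ^a ≤ vol {J ≤ λ}` bounds the normalizer below by `e⁻¹ c λ^a`. Off `{J ≤ ε}` and for
`2λ ≤ λ₁` one has `exp (-J/λ) ≤ exp (-ε/(2λ)) exp (-J/λ₁)`, so the mass there is
`O(exp (-ε/(2λ)))`. Since `exp (-ε/(2λ))` decays faster than any power of `λ`, the Gibbs
probability of `{J ≤ ε}` tends to `1` as `λ → 0⁺`.
-/

open MeasureTheory Filter Topology Set

noncomputable def gibbsMeasure {X : Type*} [MeasurableSpace X] (μ : Measure X) (J : X → ℝ)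
    (lam : ℝ) : Measure X :=
  μ.withDensity fun x => ENNReal.ofReal (Real.exp (-J x / lam) / ∫ y, Real.exp (-J y / lam) ∂μ)

theorem Real.tendsto_exp_neg_div_div_rpow_nhdsGT_zero (a : ℝ) {b : ℝ} (hb : 0 < b) :
    Tendsto (fun t => Real.exp (-b / t) / t ^ a) (𝓝[>] 0) (𝓝 0) := by
  refine ((tendsto_rpow_mul_exp_neg_mul_atTop_nhds_zero a b hb).comp
    tendsto_inv_nhdsGT_zero).congr' ?_
  filter_upwards [self_mem_nhdsWithin] with t (ht : 0 < t)
  rw [Function.comp_apply, Real.inv_rpow ht.le, ← div_eq_inv_mul, neg_mul, ← div_eq_mul_inv,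
    neg_div]

section Sublevel

variable {X : Type*} [MeasurableSpace X] {μ : Measure X}

theorem exists_measure_sublevel_ne_zero [NeZero μ] (J : X → ℝ) :
    ∃ n : ℕ, μ {x | J x ≤ n} ≠ 0 := by
  by_contra! h
  have hcover : ⋃ n : ℕ, {x | J x ≤ n} = univ :=
    eq_univ_of_forall fun x => mem_iUnion.2 (exists_nat_ge (J x))
  exact NeZero.ne μ (Measure.measure_univ_eq_zero.1 (hcover ▸ measure_iUnion_null h))

theorem exists_mul_rpow_le_measureReal_sublevel [NeZero μ] {J : X → ℝ} {ι : Type*} [Fintype ι]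
    {α cl cu : ι → ℝ} (hcl : ∀ k, 0 ≤ cl k) (hzero : ∀ k, cl k = 0 ↔ cu k = 0)
    (hbound : ∀ t : ℝ, 0 ≤ t →
      ENNReal.ofReal (∑ k, cl k * t ^ α k) ≤ μ {x | J x ≤ t} ∧
        μ {x | J x ≤ t} ≤ ENNReal.ofReal (∑ k, cu k * t ^ α k)) :
    ∃ c > 0, ∃ a : ℝ, ∀ t : ℝ, 0 ≤ t → c * t ^ a ≤ μ.real {x | J x ≤ t} := by
  obtain ⟨n, hn⟩ := exists_measure_sublevel_ne_zero (μ := μ) J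
  obtain ⟨k, hk⟩ : ∃ k, cu k ≠ 0 := by
    by_contra! h
    exact hn (by simpa [h] using (hbound n n.cast_nonneg).2)
  refine ⟨cl k, (hcl k).lt_of_ne (Ne.symm (mt (hzero k).1 hk)), α k, fun t ht => ?_⟩
  have hfin : μ {x | J x ≤ t} ≠ ⊤ := ne_top_of_le_ne_top ENNReal.ofReal_ne_top (hbound t ht).2
  calc cl k * t ^ α k ≤ ∑ j, cl j * t ^ α j :=
        Finset.single_le_sum (fun j _ => mul_nonneg (hcl j) (Real.rpow_nonneg ht _))
          (Finset.mem_univ k)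
    _ ≤ μ.real {x | J x ≤ t} := (ENNReal.ofReal_le_iff_le_toReal hfin).1 (hbound t ht).1

end Sublevel

section Gibbs

variable {X : Type*} [MeasurableSpace X] {μ : Measure X} {J : X → ℝ} {lam lam₁ : ℝ}

theorem gibbsMeasure_apply_toReal (hint : Integrable (fun x => Real.exp (-J x / lam)) μ)
    {s : Set X} (hs : MeasurableSet s) :
    (gibbsMeasure μ J lam s).toReal =
      (∫ x in s, Real.exp (-J x / lam) ∂μ) / ∫ x, Real.exp (-J x / lam) ∂μ := by
  have hnn : 0 ≤ fun x => Real.exp (-J x / lam) / ∫ y, Real.exp (-J y / lam) ∂μ :=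
    fun x => div_nonneg (Real.exp_pos _).le (integral_nonneg fun y => (Real.exp_pos _).le)
  rw [gibbsMeasure, withDensity_apply _ hs,
    ← ofReal_integral_eq_lintegral_ofReal (hint.div_const _).restrict (Eventually.of_forall hnn),
    ENNReal.toReal_ofReal (integral_nonneg hnn), integral_div]

theorem gibbsMeasure_sublevel_toReal (hJm : Measurable J)
    (hint : Integrable (fun x => Real.exp (-J x / lam)) μ)
    (hZ : ∫ x, Real.exp (-J x / lam) ∂μ ≠ 0) (ε : ℝ) :
    (gibbsMeasure μ J lam {x | J x ≤ ε}).toReal =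
      1 - (∫ x in {x | J x ≤ ε}ᶜ, Real.exp (-J x / lam) ∂μ) / ∫ x, Real.exp (-J x / lam) ∂μ := by
  have hs : MeasurableSet {x | J x ≤ ε} := hJm measurableSet_Iic
  rw [gibbsMeasure_apply_toReal hint hs, eq_sub_iff_add_eq, ← add_div,
    integral_add_compl hs hint, div_self hZ]

theorem integrable_exp_neg_div_of_le (hJm : Measurable J) (hJ0 : ∀ x, 0 ≤ J x)
    (hint : Integrable (fun x => Real.exp (-J x / lam₁)) μ) (hlam : 0 < lam) (hle : lam ≤ lam₁) :
    Integrable (fun x => Real.exp (-J x / lam)) μ := by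
  refine hint.mono' (hJm.neg.div_const _).exp.aestronglyMeasurable
    (Eventually.of_forall fun x => ?_)
  rw [Real.norm_of_nonneg (Real.exp_pos _).le, Real.exp_le_exp, neg_div, neg_div, neg_le_neg_iff]
  exact div_le_div_of_nonneg_left (hJ0 x) hlam hle

theorem exp_neg_one_mul_measureReal_sublevel_le_integral (hJm : Measurable J)
    (hint : Integrable (fun x => Real.exp (-J x / lam)) μ) (hlam : 0 < lam) :
    Real.exp (-1) * μ.real {x | J x ≤ lam} ≤ ∫ x, Real.exp (-J x / lam) ∂μ := by
  have hs : MeasurableSet {x | J x ≤ lam} := hJm measurableSet_Iic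
  have hind : {x | J x ≤ lam}.indicator (fun _ => Real.exp (-1)) ≤ fun x => Real.exp (-J x / lam) :=
    indicator_le' (fun x (hx : J x ≤ lam) => by
        rw [Real.exp_le_exp, neg_div, neg_le_neg_iff]
        exact (div_le_one hlam).2 hx)
      fun x _ => (Real.exp_pos _).le
  calc Real.exp (-1) * μ.real {x | J x ≤ lam}
      = ∫ x, {x | J x ≤ lam}.indicator (fun _ => Real.exp (-1)) x ∂μ := by
        rw [integral_indicator_const _ hs, smul_eq_mul, mul_comm]
    _ ≤ ∫ x, Real.exp (-J x / lam) ∂μ :=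
        integral_mono_of_nonneg (Eventually.of_forall fun x => indicator_nonneg
          (fun _ _ => (Real.exp_pos _).le) x) hint (Eventually.of_forall hind)

theorem setIntegral_exp_neg_div_sublevel_compl_le (hJm : Measurable J) (hJ0 : ∀ x, 0 ≤ J x)
    (hint : Integrable (fun x => Real.exp (-J x / lam₁)) μ) (hlam : 0 < lam)
    (hle : 2 * lam ≤ lam₁) (ε : ℝ) :
    ∫ x in {x | J x ≤ ε}ᶜ, Real.exp (-J x / lam) ∂μ ≤
      Real.exp (-ε / (2 * lam)) * ∫ x, Real.exp (-J x / lam₁) ∂μ := by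
  have hint' := integrable_exp_neg_div_of_le hJm hJ0 hint hlam (by linarith)
  calc ∫ x in {x | J x ≤ ε}ᶜ, Real.exp (-J x / lam) ∂μ
      ≤ ∫ x in {x | J x ≤ ε}ᶜ, Real.exp (-ε / (2 * lam)) * Real.exp (-J x / lam₁) ∂μ := by
        refine setIntegral_mono_on hint'.integrableOn (hint.const_mul _).integrableOn
          (hJm measurableSet_Iic).compl fun x hx => ?_
        have hεJ : ε < J x := lt_of_not_ge hx
        -- split `J/lam` into two halves, one bounded below by `ε/(2 lam)`, the other by `J/lam₁`
        have h1 : ε / (2 * lam) ≤ J x / (2 * lam) := by gcongr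
        have h2 : J x / lam₁ ≤ J x / (2 * lam) :=
          div_le_div_of_nonneg_left (hJ0 x) (by linarith) hle
        rw [← Real.exp_add, Real.exp_le_exp, neg_div, neg_div, neg_div]
        have : J x / lam = J x / (2 * lam) + J x / (2 * lam) := by field_simp; ring
        linarith
    _ = Real.exp (-ε / (2 * lam)) * ∫ x in {x | J x ≤ ε}ᶜ, Real.exp (-J x / lam₁) ∂μ :=
        integral_const_mul _ _
    _ ≤ Real.exp (-ε / (2 * lam)) * ∫ x, Real.exp (-J x / lam₁) ∂μ :=
        mul_le_mul_of_nonneg_left (setIntegral_le_integral hint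
          (Eventually.of_forall fun x => (Real.exp_pos _).le)) (Real.exp_pos _).le

end Gibbs

section Concentration

variable {X : Type*} [MeasurableSpace X] {μ : Measure X} {J : X → ℝ} {lam₁ c a : ℝ}

theorem mul_rpow_le_integral_exp_neg_div (hJm : Measurable J)
    (hlow : ∀ t : ℝ, 0 ≤ t → c * t ^ a ≤ μ.real {x | J x ≤ t}) {lam : ℝ}
    (hint : Integrable (fun x => Real.exp (-J x / lam)) μ) (hlam : 0 < lam) :
    Real.exp (-1) * (c * lam ^ a) ≤ ∫ x, Real.exp (-J x / lam) ∂μ :=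
  (mul_le_mul_of_nonneg_left (hlow lam hlam.le) (Real.exp_pos _).le).trans
    (exp_neg_one_mul_measureReal_sublevel_le_integral hJm hint hlam)

theorem tendsto_setIntegral_sublevel_compl_div_integral (hJm : Measurable J) (hJ0 : ∀ x, 0 ≤ J x)
    (hlam₁ : 0 < lam₁) (hint : Integrable (fun x => Real.exp (-J x / lam₁)) μ) (hc : 0 < c)
    (hlow : ∀ t : ℝ, 0 ≤ t → c * t ^ a ≤ μ.real {x | J x ≤ t}) {ε : ℝ} (hε : 0 < ε) :
    Tendsto (fun lam => (∫ x in {x | J x ≤ ε}ᶜ, Real.exp (-J x / lam) ∂μ) /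
      ∫ x, Real.exp (-J x / lam) ∂μ) (𝓝[>] 0) (𝓝 0) := by
  set C := ∫ x, Real.exp (-J x / lam₁) ∂μ
  have hbound := (Real.tendsto_exp_neg_div_div_rpow_nhdsGT_zero a (half_pos hε)).const_mul
    (C / (Real.exp (-1) * c))
  rw [mul_zero] at hbound
  refine tendsto_of_tendsto_of_tendsto_of_le_of_le' tendsto_const_nhds hbound ?_ ?_
  · exact Eventually.of_forall fun lam => div_nonneg
      (setIntegral_nonneg_of_ae (Eventually.of_forall fun x => (Real.exp_pos _).le))
      (integral_nonneg fun x => (Real.exp_pos _).le)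
  filter_upwards [Ioo_mem_nhdsGT (half_pos hlam₁)] with lam ⟨hlam, hle⟩
  have hint' := integrable_exp_neg_div_of_le hJm hJ0 hint hlam (by linarith)
  have hZ := mul_rpow_le_integral_exp_neg_div hJm hlow hint' hlam
  have hpos : 0 < Real.exp (-1) * (c * lam ^ a) := by positivity
  have hT := setIntegral_exp_neg_div_sublevel_compl_le hJm hJ0 hint hlam (by linarith) ε
  calc (∫ x in {x | J x ≤ ε}ᶜ, Real.exp (-J x / lam) ∂μ) / ∫ x, Real.exp (-J x / lam) ∂μ
      ≤ Real.exp (-ε / (2 * lam)) * C / (Real.exp (-1) * (c * lam ^ a)) :=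
        div_le_div₀ (by positivity) hT hpos hZ
    _ = C / (Real.exp (-1) * c) * (Real.exp (-(ε / 2) / lam) / lam ^ a) := by
        rw [show -ε / (2 * lam) = -(ε / 2) / lam by ring]
        field_simp

theorem tendsto_gibbsMeasure_sublevel (hJm : Measurable J) (hJ0 : ∀ x, 0 ≤ J x)
    (hlam₁ : 0 < lam₁) (hint : Integrable (fun x => Real.exp (-J x / lam₁)) μ) (hc : 0 < c)
    (hlow : ∀ t : ℝ, 0 ≤ t → c * t ^ a ≤ μ.real {x | J x ≤ t}) {ε : ℝ} (hε : 0 < ε) :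
    Tendsto (fun lam => (gibbsMeasure μ J lam {x | J x ≤ ε}).toReal) (𝓝[>] 0) (𝓝 1) := by
  have h := (tendsto_setIntegral_sublevel_compl_div_integral hJm hJ0 hlam₁ hint hc hlow
    hε).const_sub 1
  rw [sub_zero] at h
  refine h.congr' ?_
  filter_upwards [Ioc_mem_nhdsGT hlam₁] with lam ⟨hlam, hle⟩
  have hint' := integrable_exp_neg_div_of_le hJm hJ0 hint hlam hle
  have hZ := mul_rpow_le_integral_exp_neg_div hJm hlow hint' hlam
  have hpos : 0 < Real.exp (-1) * (c * lam ^ a) := by positivity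
  exact (gibbsMeasure_sublevel_toReal hJm hint' (hpos.trans_le hZ).ne' ε).symm

end Concentration

theorem stmt19_general (d : ℕ) (J : EuclideanSpace ℝ (Fin d) → ℝ) (hJmeas : Measurable J)
    (hJ0 : ∀ Y, 0 ≤ J Y)
    (M : ℕ) (α cl cu : Fin (M + 1) → ℝ)
    (hcl : ∀ k, 0 ≤ cl k)
    (hzero : ∀ k, cl k = 0 ↔ cu k = 0)
    (hbound : ∀ t : ℝ, 0 ≤ t →
      ENNReal.ofReal (∑ k, cl k * t ^ α k) ≤
          volume {Y : EuclideanSpace ℝ (Fin d) | J Y ≤ t} ∧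
        volume {Y : EuclideanSpace ℝ (Fin d) | J Y ≤ t} ≤
          ENNReal.ofReal (∑ k, cu k * t ^ α k))
    (lam1 : ℝ) (hlam1 : 0 < lam1)
    (hInt : ∀ lam ∈ Set.Ioc (0 : ℝ) lam1,
      Integrable fun Y : EuclideanSpace ℝ (Fin d) => Real.exp (-J Y / lam)) :
    ∀ ε > (0 : ℝ), ∀ δ > (0 : ℝ), ∃ lam0 > (0 : ℝ), ∀ lam : ℝ, 0 < lam → lam ≤ lam0 →
      1 - δ ≤
        ((volume.withDensity fun Y : EuclideanSpace ℝ (Fin d) =>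
            ENNReal.ofReal (Real.exp (-J Y / lam) /
              ∫ X : EuclideanSpace ℝ (Fin d), Real.exp (-J X / lam)))
          {Y | J Y ≤ ε}).toReal := by
  intro ε hε δ hδ
  obtain ⟨c, hc, a, hlow⟩ := exists_mul_rpow_le_measureReal_sublevel hcl hzero hbound
  have hconc := tendsto_gibbsMeasure_sublevel hJmeas hJ0 hlam1 (hInt lam1 ⟨hlam1, le_rfl⟩) hc
    hlow hε
  obtain ⟨lam0, hlam0, hsub⟩ :=
    mem_nhdsGT_iff_exists_Ioc_subset.1 (hconc.eventually (lt_mem_nhds (sub_lt_self 1 hδ)))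
  exact ⟨lam0, hlam0, fun lam hlam hle => (hsub ⟨hlam, hle⟩).le⟩

theorem stmt19 (d : ℕ) (J : EuclideanSpace ℝ (Fin d) → ℝ) (hJmeas : Measurable J)
    (hJ0 : ∀ Y, 0 ≤ J Y) (hmin : ∃ Y, J Y = 0)
    (M : ℕ) (α cl cu : Fin (M + 1) → ℝ)
    (hα0 : 0 < α 0) (hαmono : StrictMono α)
    (hcl : ∀ k, 0 ≤ cl k) (hle : ∀ k, cl k ≤ cu k)
    (hzero : ∀ k, cl k = 0 ↔ cu k = 0)
    (hbound : ∀ t : ℝ, 0 ≤ t →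
      ENNReal.ofReal (∑ k, cl k * t ^ α k) ≤
          volume {Y : EuclideanSpace ℝ (Fin d) | J Y ≤ t} ∧
        volume {Y : EuclideanSpace ℝ (Fin d) | J Y ≤ t} ≤
          ENNReal.ofReal (∑ k, cu k * t ^ α k))
    (f : ℝ → ℝ) (hfmeas : Measurable f) (hfnn : ∀ x, 0 ≤ f x)
    (hac : ∀ t : ℝ, 0 ≤ t →
      (volume {Y : EuclideanSpace ℝ (Fin d) | J Y ≤ t}).toReal = ∫ x in (0 : ℝ)..t, f x)
    (lam1 : ℝ) (hlam1 : 0 < lam1)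
    (hInt : ∀ lam ∈ Set.Ioc (0 : ℝ) lam1,
      Integrable fun Y : EuclideanSpace ℝ (Fin d) => Real.exp (-J Y / lam)) :
    ∀ ε > (0 : ℝ), ∀ δ > (0 : ℝ), ∃ lam0 > (0 : ℝ), ∀ lam : ℝ, 0 < lam → lam ≤ lam0 →
      1 - δ ≤
        ((volume.withDensity fun Y : EuclideanSpace ℝ (Fin d) =>
            ENNReal.ofReal (Real.exp (-J Y / lam) /
              ∫ X : EuclideanSpace ℝ (Fin d), Real.exp (-J X / lam)))
          {Y | J Y ≤ ε}).toReal :=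
  stmt19_general d J hJmeas hJ0 M α cl cu hcl hzero hbound lam1 hlam1 hInt
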